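/- arXiv:2406.15460 — 3 statements merged into one kernel-verified Lean document; each statement's English description precedes it below -/
import Mathlib

section
/- Let n ≥ 2 be an integer divisible by 3. Then in the stone game on the n-by-n board there exists a nonzero number of legal moves that starts from the empty board and ends with the empty board (no stones). -/
open Finset

/-- A single legal move in the stone game on the `n`-by-`n` board.  The state
is the finite set of cells (column, row) currently containing stones.  Either
place stones on an empty L-shaped tromino `(i, j), (i+1, j), (i, j+1)`
(rotations not allowed), or clear a full column or a full row. -/
def StoneMove (n : ℕ) (s t : Finset (Fin n × Fin n)) : Prop :=
  (∃ (i j : Fin n) (hi : (i : ℕ) + 1 < n) (hj : (j : ℕ) + 1 < n),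
      (i, j) ∉ s ∧ (⟨(i : ℕ) + 1, hi⟩, j) ∉ s ∧ (i, ⟨(j : ℕ) + 1, hj⟩) ∉ s ∧
      t = s ∪ {(i, j), (⟨(i : ℕ) + 1, hi⟩, j), (i, ⟨(j : ℕ) + 1, hj⟩)}) ∨
  (∃ i : Fin n, (∀ j : Fin n, (i, j) ∈ s) ∧
      t = s.filter (fun p => p.1 ≠ i)) ∨
  (∃ j : Fin n, (∀ i : Fin n, (i, j) ∈ s) ∧
      t = s.filter (fun p => p.2 ≠ j))

def fmk {n : ℕ} (hn : 0 < n) (p : ℕ × ℕ) : Fin n × Fin n :=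
  (⟨p.1 % n, Nat.mod_lt _ hn⟩, ⟨p.2 % n, Nat.mod_lt _ hn⟩)

def trom {n : ℕ} (hn : 0 < n) (c : ℕ × ℕ) : Finset (Fin n × Fin n) :=
  {fmk hn (c.1, c.2), fmk hn (c.1 + 1, c.2), fmk hn (c.1, c.2 + 1)}

lemma mem_trom {n : ℕ} (hn : 0 < n) {c : ℕ × ℕ} (h1 : c.1 + 1 < n) (h2 : c.2 + 1 < n)
    (p : Fin n × Fin n) :
    p ∈ trom hn c ↔
      ((p.1 : ℕ) = c.1 ∧ (p.2 : ℕ) = c.2) ∨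
      ((p.1 : ℕ) = c.1 + 1 ∧ (p.2 : ℕ) = c.2) ∨
      ((p.1 : ℕ) = c.1 ∧ (p.2 : ℕ) = c.2 + 1) := by
  have e1 : c.1 % n = c.1 := Nat.mod_eq_of_lt (by omega)
  have e2 : c.2 % n = c.2 := Nat.mod_eq_of_lt (by omega)
  have e3 : (c.1 + 1) % n = c.1 + 1 := Nat.mod_eq_of_lt h1
  have e4 : (c.2 + 1) % n = c.2 + 1 := Nat.mod_eq_of_lt h2
  simp [trom, fmk, Prod.ext_iff, Fin.ext_iff, e1, e2, e3, e4]

lemma place {n : ℕ} (hn : 0 < n) {s : Finset (Fin n × Fin n)} {c : ℕ × ℕ}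
    (h1 : c.1 + 1 < n) (h2 : c.2 + 1 < n)
    (hdis : ∀ p ∈ trom hn c, p ∉ s) :
    StoneMove n s (s ∪ trom hn c) := by
  left
  refine ⟨⟨c.1, by omega⟩, ⟨c.2, by omega⟩, h1, h2, ?_, ?_, ?_, ?_⟩
  · exact hdis _ ((mem_trom hn h1 h2 _).2 (Or.inl ⟨rfl, rfl⟩))
  · exact hdis _ ((mem_trom hn h1 h2 _).2 (Or.inr (Or.inl ⟨rfl, rfl⟩)))
  · exact hdis _ ((mem_trom hn h1 h2 _).2 (Or.inr (Or.inr ⟨rfl, rfl⟩)))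
  · congr 1
    ext p
    rw [mem_trom hn h1 h2]
    simp [Prod.ext_iff, Fin.ext_iff]

lemma place_many {n : ℕ} (hn : 0 < n) (C : Finset (ℕ × ℕ)) :
    ∀ s : Finset (Fin n × Fin n),
    (∀ c ∈ C, c.1 + 1 < n ∧ c.2 + 1 < n) →
    (∀ c ∈ C, ∀ p ∈ trom hn c, p ∉ s) →
    (∀ c ∈ C, ∀ c' ∈ C, c ≠ c' → ∀ p ∈ trom hn c, p ∉ trom hn c') →
    Relation.ReflTransGen (StoneMove n) s (s ∪ C.biUnion (trom hn)) := by
  induction C using Finset.induction with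
  | empty => intro s _ _ _; simpa using Relation.ReflTransGen.refl
  | @insert a C ha ih =>
    intro s hb hd hp
    have h1 := (hb a (mem_insert_self a C)).1
    have h2 := (hb a (mem_insert_self a C)).2
    have step : StoneMove n s (s ∪ trom hn a) :=
      place hn h1 h2 (hd a (mem_insert_self a C))
    have rest := ih (s ∪ trom hn a)
      (fun c hc => hb c (mem_insert_of_mem hc))
      (fun c hc p hpc => by
        simp only [mem_union, not_or]
        exact ⟨hd c (mem_insert_of_mem hc) p hpc,
          hp c (mem_insert_of_mem hc) a (mem_insert_self a C)
            (by rintro rfl; exact ha hc) p hpc⟩)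
      (fun c hc c' hc' hne =>
        hp c (mem_insert_of_mem hc) c' (mem_insert_of_mem hc') hne)
    refine Relation.ReflTransGen.head step ?_
    have he : s ∪ trom hn a ∪ C.biUnion (trom hn)
        = s ∪ (insert a C).biUnion (trom hn) := by
      rw [biUnion_insert, union_assoc]
    rw [← he]; exact rest

lemma clear_cols {n : ℕ} (I : Finset (Fin n)) :
    ∀ s : Finset (Fin n × Fin n),
    (∀ i ∈ I, ∀ j, (i, j) ∈ s) →
    Relation.ReflTransGen (StoneMove n) s (s.filter (fun p => p.1 ∉ I)) := by
  induction I using Finset.induction with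
  | empty => intro s _; simpa using Relation.ReflTransGen.refl
  | @insert a I ha ih =>
    intro s h
    have step : StoneMove n s (s.filter (fun p => p.1 ≠ a)) :=
      Or.inr (Or.inl ⟨a, h a (mem_insert_self a I), rfl⟩)
    have rest := ih (s.filter (fun p => p.1 ≠ a))
      (fun i hi j => by
        simp only [mem_filter]
        exact ⟨h i (mem_insert_of_mem hi) j, by rintro rfl; exact ha hi⟩)
    refine Relation.ReflTransGen.head step ?_
    have he : (s.filter (fun p => p.1 ≠ a)).filter (fun p => p.1 ∉ I)
        = s.filter (fun p => p.1 ∉ insert a I) := by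
      rw [filter_filter]
      apply filter_congr; intro p _; simp [not_or]
    rw [← he]; exact rest

lemma clear_rows {n : ℕ} (I : Finset (Fin n)) :
    ∀ s : Finset (Fin n × Fin n),
    (∀ j ∈ I, ∀ i, (i, j) ∈ s) →
    Relation.ReflTransGen (StoneMove n) s (s.filter (fun p => p.2 ∉ I)) := by
  induction I using Finset.induction with
  | empty => intro s _; simpa using Relation.ReflTransGen.refl
  | @insert a I ha ih =>
    intro s h
    have step : StoneMove n s (s.filter (fun p => p.2 ≠ a)) :=
      Or.inr (Or.inr ⟨a, h a (mem_insert_self a I), rfl⟩)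
    have rest := ih (s.filter (fun p => p.2 ≠ a))
      (fun i hi j => by
        simp only [mem_filter]
        exact ⟨h i (mem_insert_of_mem hi) j, by rintro rfl; exact ha hi⟩)
    refine Relation.ReflTransGen.head step ?_
    have he : (s.filter (fun p => p.2 ≠ a)).filter (fun p => p.2 ∉ I)
        = s.filter (fun p => p.2 ∉ insert a I) := by
      rw [filter_filter]
      apply filter_congr; intro p _; simp [not_or]
    rw [← he]; exact rest

/-- 2021 USAMO Problem 3, sufficiency: if `3 ∣ n` (and `n ≥ 2`), some nonzero
number of legal moves takes the empty board back to the empty board. -/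
theorem usamo2021_p3_of_three_dvd (n : ℕ) (hn : 2 ≤ n) (h3 : 3 ∣ n) :
    Relation.TransGen (StoneMove n) ∅ ∅ := by
  obtain ⟨k, rfl⟩ := h3
  have hk : 1 ≤ k := by omega
  have hn0 : 0 < 3 * k := by omega
  -- corner sets
  set C1 : Finset (ℕ × ℕ) :=
    (range k ×ˢ range k).biUnion
      (fun ab => {(3 * ab.1, 3 * ab.2), (3 * ab.1 + 1, 3 * ab.2 + 1)}) with hC1
  set C3 : Finset (ℕ × ℕ) :=
    (range k ×ˢ range k).image (fun ab => (3 * ab.1, 3 * ab.2 + 1)) with hC3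
  have memC1 : ∀ c, c ∈ C1 ↔ ∃ a < k, ∃ b < k,
      c = (3 * a, 3 * b) ∨ c = (3 * a + 1, 3 * b + 1) := by
    intro c
    simp only [hC1, mem_biUnion, mem_product, mem_range, mem_insert, mem_singleton]
    constructor
    · rintro ⟨ab, ⟨h1, h2⟩, h⟩; exact ⟨ab.1, h1, ab.2, h2, h⟩
    · rintro ⟨a, h1, b, h2, h⟩; exact ⟨(a, b), ⟨h1, h2⟩, h⟩
  have memC3 : ∀ c, c ∈ C3 ↔ ∃ a < k, ∃ b < k, c = (3 * a, 3 * b + 1) := by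
    intro c
    simp only [hC3, mem_image, mem_product, mem_range]
    constructor
    · rintro ⟨ab, ⟨h1, h2⟩, h⟩; exact ⟨ab.1, h1, ab.2, h2, h.symm⟩
    · rintro ⟨a, h1, b, h2, h⟩; exact ⟨(a, b), ⟨h1, h2⟩, h.symm⟩
  have bndC1 : ∀ c ∈ C1, c.1 + 1 < 3 * k ∧ c.2 + 1 < 3 * k := by
    intro c hc; rw [memC1] at hc
    obtain ⟨a, h1, b, h2, h | h⟩ := hc <;> subst h <;> constructor <;> simp <;> omega
  have bndC3 : ∀ c ∈ C3, c.1 + 1 < 3 * k ∧ c.2 + 1 < 3 * k := by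
    intro c hc; rw [memC3] at hc
    obtain ⟨a, h1, b, h2, h⟩ := hc; subst h; constructor <;> simp <;> omega
  -- intermediate states
  set S1 : Finset (Fin (3 * k) × Fin (3 * k)) :=
    univ.filter (fun p => (p.2 : ℕ) % 3 = 1 ∨
      ((p.2 : ℕ) % 3 = 0 ∧ (p.1 : ℕ) % 3 ≤ 1) ∨
      ((p.2 : ℕ) % 3 = 2 ∧ (p.1 : ℕ) % 3 = 1)) with hS1
  set S2 : Finset (Fin (3 * k) × Fin (3 * k)) :=
    univ.filter (fun p => ((p.2 : ℕ) % 3 = 0 ∧ (p.1 : ℕ) % 3 ≤ 1) ∨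
      ((p.2 : ℕ) % 3 = 2 ∧ (p.1 : ℕ) % 3 = 1)) with hS2
  set S3 : Finset (Fin (3 * k) × Fin (3 * k)) :=
    univ.filter (fun p => (p.1 : ℕ) % 3 ≤ 1) with hS3
  -- characterization of membership in tromino unions
  have memU1 : ∀ p : Fin (3 * k) × Fin (3 * k),
      p ∈ C1.biUnion (trom hn0) ↔ ((p.2 : ℕ) % 3 = 1 ∨
      ((p.2 : ℕ) % 3 = 0 ∧ (p.1 : ℕ) % 3 ≤ 1) ∨
      ((p.2 : ℕ) % 3 = 2 ∧ (p.1 : ℕ) % 3 = 1)) := by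
    intro p
    constructor
    · intro hp
      rw [mem_biUnion] at hp
      obtain ⟨c, hc, hpc⟩ := hp
      rw [mem_trom hn0 (bndC1 c hc).1 (bndC1 c hc).2] at hpc
      rw [memC1] at hc
      obtain ⟨a, h1, b, h2, h | h⟩ := hc <;> subst h <;> simp at hpc <;> omega
    · intro hpred
      rw [mem_biUnion]
      have hp1 : (p.1 : ℕ) < 3 * k := p.1.isLt
      have hp2 : (p.2 : ℕ) < 3 * k := p.2.isLt
      by_cases hcase : (p.2 : ℕ) % 3 = 0 ∨ ((p.2 : ℕ) % 3 = 1 ∧ (p.1 : ℕ) % 3 = 0)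
      · refine ⟨(3 * ((p.1 : ℕ) / 3), 3 * ((p.2 : ℕ) / 3)), ?_, ?_⟩
        · rw [memC1]
          exact ⟨(p.1 : ℕ) / 3, by omega, (p.2 : ℕ) / 3, by omega, Or.inl rfl⟩
        · rw [mem_trom hn0 (by simp; omega) (by simp; omega)]
          simp; omega
      · refine ⟨(3 * ((p.1 : ℕ) / 3) + 1, 3 * ((p.2 : ℕ) / 3) + 1), ?_, ?_⟩
        · rw [memC1]
          exact ⟨(p.1 : ℕ) / 3, by omega, (p.2 : ℕ) / 3, by omega, Or.inr rfl⟩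
        · rw [mem_trom hn0 (by simp; omega) (by simp; omega)]
          simp; omega
  have memU3 : ∀ p : Fin (3 * k) × Fin (3 * k),
      p ∈ C3.biUnion (trom hn0) ↔
      (((p.2 : ℕ) % 3 = 1 ∧ (p.1 : ℕ) % 3 ≤ 1) ∨
       ((p.2 : ℕ) % 3 = 2 ∧ (p.1 : ℕ) % 3 = 0)) := by
    intro p
    constructor
    · intro hp
      rw [mem_biUnion] at hp
      obtain ⟨c, hc, hpc⟩ := hp
      rw [mem_trom hn0 (bndC3 c hc).1 (bndC3 c hc).2] at hpc
      rw [memC3] at hc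
      obtain ⟨a, h1, b, h2, h⟩ := hc; subst h; simp at hpc; omega
    · intro hpred
      rw [mem_biUnion]
      have hp1 : (p.1 : ℕ) < 3 * k := p.1.isLt
      have hp2 : (p.2 : ℕ) < 3 * k := p.2.isLt
      refine ⟨(3 * ((p.1 : ℕ) / 3), 3 * ((p.2 : ℕ) / 3) + 1), ?_, ?_⟩
      · rw [memC3]
        exact ⟨(p.1 : ℕ) / 3, by omega, (p.2 : ℕ) / 3, by omega, rfl⟩
      · rw [mem_trom hn0 (by simp; omega) (by simp; omega)]
        simp; omega
  -- pairwise disjointness of trominoes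
  have disj1 : ∀ c ∈ C1, ∀ c' ∈ C1, c ≠ c' → ∀ p ∈ trom hn0 c, p ∉ trom hn0 c' := by
    intro c hc c' hc' hne p hp hp'
    rw [mem_trom hn0 (bndC1 c hc).1 (bndC1 c hc).2] at hp
    rw [mem_trom hn0 (bndC1 c' hc').1 (bndC1 c' hc').2] at hp'
    rw [memC1] at hc hc'
    obtain ⟨a, h1, b, h2, h | h⟩ := hc <;> subst h <;>
      obtain ⟨a', h1', b', h2', h' | h'⟩ := hc' <;> subst h' <;>
      simp only [Prod.mk.injEq, ne_eq] at hne hp hp' <;> omega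
  have disj3 : ∀ c ∈ C3, ∀ c' ∈ C3, c ≠ c' → ∀ p ∈ trom hn0 c, p ∉ trom hn0 c' := by
    intro c hc c' hc' hne p hp hp'
    rw [mem_trom hn0 (bndC3 c hc).1 (bndC3 c hc).2] at hp
    rw [mem_trom hn0 (bndC3 c' hc').1 (bndC3 c' hc').2] at hp'
    rw [memC3] at hc hc'
    obtain ⟨a, h1, b, h2, h⟩ := hc; subst h
    obtain ⟨a', h1', b', h2', h'⟩ := hc'; subst h'
    simp only [Prod.mk.injEq, ne_eq] at hne hp hp'
    omega
  -- Phase A : empty → S1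
  have phaseA : Relation.ReflTransGen (StoneMove (3 * k)) ∅ S1 := by
    have := place_many hn0 C1 ∅ bndC1 (by simp) disj1
    rw [empty_union] at this
    have hEq : C1.biUnion (trom hn0) = S1 := by
      ext p; rw [memU1 p, hS1, mem_filter]; simp
    rwa [hEq] at this
  -- Phase B : S1 → S2 (clear rows ≡ 1 mod 3)
  have phaseB : Relation.ReflTransGen (StoneMove (3 * k)) S1 S2 := by
    set R : Finset (Fin (3 * k)) := univ.filter (fun j => (j : ℕ) % 3 = 1) with hR
    have := clear_rows R S1 (by
      intro j hj i
      rw [hR, mem_filter] at hj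
      rw [hS1, mem_filter]
      exact ⟨mem_univ _, Or.inl hj.2⟩)
    have hEq : S1.filter (fun p => p.2 ∉ R) = S2 := by
      ext p
      rw [hS1, hS2]
      simp only [mem_filter, mem_univ, true_and, hR, not_and]
      constructor
      · rintro ⟨h1, h2⟩; omega
      · intro h; constructor
        · tauto
        · omega
    rwa [hEq] at this
  -- Phase C : S2 → S3
  have phaseC : Relation.ReflTransGen (StoneMove (3 * k)) S2 S3 := by
    have hd : ∀ c ∈ C3, ∀ p ∈ trom hn0 c, p ∉ S2 := by
      intro c hc p hp
      rw [mem_trom hn0 (bndC3 c hc).1 (bndC3 c hc).2] at hp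
      rw [memC3] at hc
      obtain ⟨a, h1, b, h2, h⟩ := hc; subst h
      simp only [Prod.mk.injEq] at hp
      rw [hS2, mem_filter]
      rintro ⟨-, h⟩
      omega
    have := place_many hn0 C3 S2 bndC3 hd disj3
    have hEq : S2 ∪ C3.biUnion (trom hn0) = S3 := by
      ext p
      rw [mem_union, memU3 p, hS2, hS3, mem_filter, mem_filter]
      simp only [mem_univ, true_and]
      have : (p.2 : ℕ) % 3 < 3 := Nat.mod_lt _ (by omega)
      omega
    rwa [hEq] at this
  -- Phase D : S3 → ∅ (clear columns ≡ 0, 1 mod 3)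
  have phaseD : Relation.ReflTransGen (StoneMove (3 * k)) S3 ∅ := by
    set I : Finset (Fin (3 * k)) := univ.filter (fun i => (i : ℕ) % 3 ≤ 1) with hI
    have := clear_cols I S3 (by
      intro i hi j
      rw [hI, mem_filter] at hi
      rw [hS3, mem_filter]
      exact ⟨mem_univ _, hi.2⟩)
    have hEq : S3.filter (fun p => p.1 ∉ I) = ∅ := by
      ext p
      rw [mem_filter, hS3, mem_filter, hI]
      simp
    rwa [hEq] at this
  -- assemble
  have hS1ne : ((⟨0, hn0⟩ : Fin (3 * k)), (⟨0, hn0⟩ : Fin (3 * k))) ∈ S1 := by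
    rw [hS1, mem_filter]; simp
  rcases Relation.reflTransGen_iff_eq_or_transGen.mp phaseA with h | h
  · rw [h] at hS1ne; simp at hS1ne
  · exact h.trans_left ((phaseB.trans phaseC).trans phaseD)
end

section
/- In the stone game on the 4-by-4 board, there is no sequence consisting of a nonzero number of legal moves that starts from the empty board and ends with the empty board. -/
open Finset

variable {n : ℕ} {M : Type*} [AddCommMonoid M] [PartialOrder M] [IsOrderedCancelAddMonoid M]

structure IsStonePotential (n : ℕ) (w : Fin n × Fin n → M) : Prop where
  tromino_pos : ∀ (i j : Fin n) (hi : (i : ℕ) + 1 < n) (hj : (j : ℕ) + 1 < n),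
    0 < w (i, j) + w (⟨i + 1, hi⟩, j) + w (i, ⟨j + 1, hj⟩)
  column_neg : ∀ i, ∑ j, w (i, j) < 0
  row_neg : ∀ j, ∑ i, w (i, j) < 0

theorem Finset.sum_lt_sum_filter_not {α : Type*} (s : Finset α) (f : α → M) (P : α → Prop)
    [DecidablePred P] (h : ∑ x ∈ s with P x, f x < 0) :
    ∑ x ∈ s, f x < ∑ x ∈ s with ¬P x, f x := by
  rw [← sum_filter_add_sum_filter_not s P f]
  exact add_lt_of_neg_left _ h

namespace IsStonePotential

variable {w : Fin n × Fin n → M} (hw : IsStonePotential n w) {s : Finset (Fin n × Fin n)}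
include hw

theorem sum_lt_sum_union_tromino (i j : Fin n) (hi : (i : ℕ) + 1 < n) (hj : (j : ℕ) + 1 < n)
    (h₀ : (i, j) ∉ s) (h₁ : (⟨i + 1, hi⟩, j) ∉ s) (h₂ : (i, ⟨j + 1, hj⟩) ∉ s) :
    ∑ p ∈ s, w p < ∑ p ∈ s ∪ {(i, j), (⟨i + 1, hi⟩, j), (i, ⟨j + 1, hj⟩)}, w p := by
  have hdisj : Disjoint s {(i, j), (⟨i + 1, hi⟩, j), (i, ⟨j + 1, hj⟩)} := by
    simp [disjoint_insert_right, h₀, h₁, h₂]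
  have htromino : ∑ p ∈ {(i, j), (⟨i + 1, hi⟩, j), (i, ⟨j + 1, hj⟩)}, w p
      = w (i, j) + w (⟨i + 1, hi⟩, j) + w (i, ⟨j + 1, hj⟩) := by
    rw [sum_insert (by simp [Fin.ext_iff]), sum_pair (by simp [Fin.ext_iff]), add_assoc]
  rw [sum_union hdisj, htromino]
  exact lt_add_of_pos_right _ (hw.tromino_pos i j hi hj)

theorem sum_lt_sum_filter_column_ne (i : Fin n) (hfull : ∀ j, (i, j) ∈ s) :
    ∑ p ∈ s, w p < ∑ p ∈ s with p.1 ≠ i, w p := by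
  refine sum_lt_sum_filter_not s w (·.1 = i) ?_
  have hcolumn : {p ∈ s | p.1 = i} = {i} ×ˢ univ := by
    ext ⟨a, b⟩
    simp only [mem_filter, mem_product, mem_singleton, mem_univ, and_true]
    exact ⟨And.right, by rintro rfl; exact ⟨hfull b, rfl⟩⟩
  simpa [hcolumn, sum_product] using hw.column_neg i

theorem sum_lt_sum_filter_row_ne (j : Fin n) (hfull : ∀ i, (i, j) ∈ s) :
    ∑ p ∈ s, w p < ∑ p ∈ s with p.2 ≠ j, w p := by
  refine sum_lt_sum_filter_not s w (·.2 = j) ?_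
  have hrow : {p ∈ s | p.2 = j} = univ ×ˢ {j} := by
    ext ⟨a, b⟩
    simp only [mem_filter, mem_product, mem_singleton, mem_univ, true_and]
    exact ⟨And.right, by rintro rfl; exact ⟨hfull a, rfl⟩⟩
  simpa [hrow, sum_product] using hw.row_neg j

theorem sum_lt_sum_of_stoneMove {t : Finset (Fin n × Fin n)} (h : StoneMove n s t) :
    ∑ p ∈ s, w p < ∑ p ∈ t, w p := by
  rcases h with ⟨i, j, hi, hj, h₀, h₁, h₂, rfl⟩ | ⟨i, hfull, rfl⟩ | ⟨j, hfull, rfl⟩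
  · exact hw.sum_lt_sum_union_tromino i j hi hj h₀ h₁ h₂
  · exact hw.sum_lt_sum_filter_column_ne i hfull
  · exact hw.sum_lt_sum_filter_row_ne j hfull

theorem not_transGen_stoneMove_self : ¬ Relation.TransGen (StoneMove n) s s := by
  intro h
  have hlt : Relation.TransGen (· < ·) (∑ p ∈ s, w p) (∑ p ∈ s, w p) :=
    h.lift (fun t => ∑ p ∈ t, w p) fun _ _ => hw.sum_lt_sum_of_stoneMove
  rw [Relation.transGen_eq_self] at hlt
  exact lt_irrefl _ hlt

end IsStonePotential

/-- Every tromino weighs `5` and every row and column weighs `-5`. -/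
def stoneWeightFour : Fin 4 × Fin 4 → ℤ := fun p =>
  ![![-31, 18, -24, 32], ![18, 11, -3, -31],
    ![-24, -3, 39, -17], ![32, -31, -17, 11]] p.1 p.2

theorem isStonePotential_stoneWeightFour : IsStonePotential 4 stoneWeightFour where
  tromino_pos := by decide
  column_neg := by decide
  row_neg := by decide

/-- The `n = 4` case of the impossibility direction of 2021 USAMO Problem 3:
on a 4-by-4 board there is no nonzero sequence of legal moves starting and
ending with the empty board. -/
theorem usamo2021_p3_four : ¬ Relation.TransGen (StoneMove 4) ∅ ∅ :=
  isStonePotential_stoneWeightFour.not_transGen_stoneMove_self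
end

section
/- Let n ≥ 2 be an integer. In the stone game on the n-by-n board, there exists a nonzero number of legal moves starting from the empty board and ending with the empty board if and only if n is divisible by 3. -/
/-!
Weight the cell `(i, j)` by `x ^ i * y ^ j`. Placing a tromino with corner `(i, j)` adds
`x ^ i * y ^ j * (1 + x + y)`, clearing column `i` removes `x ^ i * Φ(y)` and clearing row `j`
removes `y ^ j * Φ(x)`, where `Φ(z) = 1 + z + ⋯ + z ^ (n - 1)`. So a run from the empty board back
to itself, clearing columns and rows with generating functions `C` and `R`, gives
`C(x) Φ(y) + R(y) Φ(x) = 0` whenever `1 + x + y = 0`. If `3 ∤ n`, then `-1 - ω` is never an `n`-th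
root of unity when `ω` is, so `C` and `R` vanish at every `n`-th root of unity `ω ≠ 1`, hence have
all coefficients equal; `(x, y) = (1, -2)` then forces `C = R = 0`, and a run that only places
trominoes never empties the board.

Conversely, on the `3 × 3` board one can place trominoes at `(0, 0)` and `(1, 1)`, clear row `1`,
place one at `(0, 1)` and clear columns `0` and `1`. For `n = 3 k`, doing this simultaneously in
all `k²` blocks of size `3 × 3` returns the `n × n` board to empty.
-/

open Finset Relation

theorem geom_sum_eq_zero_of_pow_eq_one {R : Type*} [CommRing R] [IsDomain R] {z : R} {n : ℕ}
    (hz : z ^ n = 1) (hz1 : z ≠ 1) : ∑ i ∈ range n, z ^ i = 0 := by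
  have h := geom_sum_mul z n
  rw [hz, sub_self] at h
  exact (mul_eq_zero.1 h).resolve_right (sub_ne_zero.2 hz1)

theorem IsPrimitiveRoot.mul_eq_sum_of_forall_sum_mul_pow_eq_zero {R : Type*} [CommRing R]
    [IsDomain R] {n : ℕ} {ζ : R} (hζ : IsPrimitiveRoot ζ n) {a : Fin n → R}
    (h : ∀ z : R, z ^ n = 1 → z ≠ 1 → ∑ i, a i * z ^ (i : ℕ) = 0) (i : Fin n) :
    n * a i = ∑ j, a j := by
  have hv := Matrix.eq_zero_of_forall_index_sum_mul_pow_eq_zero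
    (f := fun k : Fin n => ζ ^ (k : ℕ)) (v := fun i => n * a i - ∑ j, a j)
    (fun k l hkl => Fin.ext (hζ.pow_inj k.isLt l.isLt hkl)) fun k => ?_
  · exact sub_eq_zero.1 (congr_fun hv i)
  simp only [sub_mul, sum_sub_distrib, mul_assoc, ← mul_sum]
  rcases eq_or_ne (k : ℕ) 0 with hk | hk
  · simp [hk, mul_comm]
  · have hz : (ζ ^ (k : ℕ)) ^ n = 1 := by
      rw [← pow_mul, mul_comm, pow_mul, hζ.pow_eq_one, one_pow]
    have hz1 := hζ.pow_ne_one_of_pos_of_lt hk k.isLt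
    rw [h _ hz hz1, Fin.sum_univ_eq_sum_range (fun i => (ζ ^ (k : ℕ)) ^ i),
      geom_sum_eq_zero_of_pow_eq_one hz hz1]
    simp

theorem neg_one_sub_pow_ne_one {n : ℕ} {z : ℂ} (h3 : ¬ 3 ∣ n) (hz : z ^ n = 1) :
    (-1 - z) ^ n ≠ 1 := by
  intro hw
  have hn : n ≠ 0 := by rintro rfl; exact h3 (dvd_zero 3)
  have mul_conj_eq_one : ∀ w : ℂ, w ^ n = 1 → w * (starRingEnd ℂ) w = 1 := fun w hw => by
    rw [Complex.mul_conj, Complex.normSq_eq_norm_sq, Complex.norm_eq_one_of_pow_eq_one hw hn]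
    simp
  have h₁ := mul_conj_eq_one z hz
  have h₂ := mul_conj_eq_one (-1 - z) hw
  rw [map_sub, map_neg, map_one] at h₂
  have hcube : z ^ 2 + z + 1 = 0 := by linear_combination z * h₂ - (1 + z) * h₁
  have hz1 : z = 1 := by
    have hcop : Nat.Coprime 3 n := (Nat.Prime.coprime_iff_not_dvd Nat.prime_three).2 h3
    simpa [hcop.gcd_eq_one] using
      pow_gcd_eq_one.2 ⟨(by linear_combination (z - 1) * hcube : z ^ 3 = 1), hz⟩
  rw [hz1] at hcube
  norm_num at hcube

theorem reflTransGen_union_biUnion {α ι : Type*} [DecidableEq α]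
    {r : Finset α → Finset α → Prop} {s : Finset α} {Q : Finset ι} {P : ι → Finset α}
    (hr : ∀ q ∈ Q, ∀ u, Disjoint (P q) u → r u (u ∪ P q))
    (hs : ∀ q ∈ Q, Disjoint (P q) s) (hP : (Q : Set ι).PairwiseDisjoint P) :
    ReflTransGen r s (s ∪ Q.biUnion P) := by
  classical
  induction Q using Finset.induction with
  | empty => simpa using ReflTransGen.refl
  | insert q Q hq ih =>
    have hQ : Disjoint (P q) (s ∪ Q.biUnion P) :=
      disjoint_union_right.2 ⟨hs q (mem_insert_self q Q), (disjoint_biUnion_right _ _ _).2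
        fun q' hq' => hP (by simp) (by simp [hq']) (by rintro rfl; exact hq hq')⟩
    have hstep := hr q (mem_insert_self q Q) _ hQ
    rw [biUnion_insert, union_left_comm, union_comm (P q)]
    exact (ih (fun q' hq' => hr q' (mem_insert_of_mem hq'))
      (fun q' hq' => hs q' (mem_insert_of_mem hq'))
      (hP.subset (by simp))).tail hstep

namespace StoneMove

variable {n : ℕ} {s t : Finset (Fin n × Fin n)}

theorem ne (h : StoneMove n s t) : s ≠ t := by
  rcases h with ⟨i, j, -, -, hij, -, -, rfl⟩ | ⟨i, hi, rfl⟩ | ⟨j, hj, rfl⟩ <;> intro hst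
  · rw [hst] at hij
    simp at hij
  · have := hi i
    rw [hst] at this
    simp at this
  · have := hj j
    rw [hst] at this
    simp at this

theorem union_tromino {i i' j j' : Fin n} (hi : (i' : ℕ) = i + 1) (hj : (j' : ℕ) = j + 1)
    (h : Disjoint {(i, j), (i', j), (i, j')} s) :
    StoneMove n s (s ∪ {(i, j), (i', j), (i, j')}) := by
  have hi' : (i : ℕ) + 1 < n := hi ▸ i'.isLt
  have hj' : (j : ℕ) + 1 < n := hj ▸ j'.isLt
  obtain rfl : i' = ⟨i + 1, hi'⟩ := Fin.ext hi
  obtain rfl : j' = ⟨j + 1, hj'⟩ := Fin.ext hj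
  simp only [disjoint_insert_left, disjoint_singleton_left] at h
  exact Or.inl ⟨i, j, hi', hj', h.1, h.2.1, h.2.2, rfl⟩

theorem reflTransGen_filter_fst_notMem (A : Finset (Fin n)) (h : ∀ i ∈ A, ∀ j, (i, j) ∈ s) :
    ReflTransGen (StoneMove n) s (s.filter (·.1 ∉ A)) := by
  induction A using Finset.induction with
  | empty => simpa using ReflTransGen.refl
  | insert i A hiA ih =>
    refine (ih fun i' hi' => h i' (mem_insert_of_mem hi')).tail
      (Or.inr (Or.inl ⟨i, fun j => ?_, ?_⟩))
    · simpa [hiA] using h i (mem_insert_self i A) j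
    · ext p
      simp [and_assoc, and_comm]

theorem reflTransGen_filter_snd_notMem (B : Finset (Fin n)) (h : ∀ j ∈ B, ∀ i, (i, j) ∈ s) :
    ReflTransGen (StoneMove n) s (s.filter (·.2 ∉ B)) := by
  induction B using Finset.induction with
  | empty => simpa using ReflTransGen.refl
  | insert j B hjB ih =>
    refine (ih fun j' hj' => h j' (mem_insert_of_mem hj')).tail
      (Or.inr (Or.inr ⟨j, fun i => ?_, ?_⟩))
    · simpa [hjB] using h j (mem_insert_self j B) i
    · ext p
      simp [and_assoc, and_comm]

end StoneMove

section Lift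

variable {k m : ℕ}

def liftCell (q : Fin k × Fin k) (c : Fin m × Fin m) : Fin (k * m) × Fin (k * m) :=
  (Fin.mkDivMod q.1 c.1, Fin.mkDivMod q.2 c.2)

def cellBlock (p : Fin (k * m) × Fin (k * m)) : Fin k × Fin k := (p.1.divNat, p.2.divNat)

def cellResidue (p : Fin (k * m) × Fin (k * m)) : Fin m × Fin m := (p.1.modNat, p.2.modNat)

theorem mem_image_liftCell {q : Fin k × Fin k} {c : Finset (Fin m × Fin m)}
    {p : Fin (k * m) × Fin (k * m)} :
    p ∈ c.image (liftCell q) ↔ cellBlock p = q ∧ cellResidue p ∈ c := by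
  constructor
  · intro hp
    obtain ⟨d, hd, rfl⟩ := mem_image.1 hp
    simpa [liftCell, cellBlock, cellResidue] using hd
  · rintro ⟨rfl, hp⟩
    exact mem_image.2 ⟨cellResidue p, hp, by simp [liftCell, cellBlock, cellResidue]⟩

def liftBoard (k : ℕ) (s : Finset (Fin m × Fin m)) : Finset (Fin (k * m) × Fin (k * m)) :=
  univ.filter fun p => cellResidue p ∈ s

theorem mem_liftBoard {s : Finset (Fin m × Fin m)} {p : Fin (k * m) × Fin (k * m)} :
    p ∈ liftBoard k s ↔ cellResidue p ∈ s := by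
  simp [liftBoard]

@[simp]
theorem liftBoard_empty : liftBoard k (∅ : Finset (Fin m × Fin m)) = ∅ := by
  simp [liftBoard]

theorem liftBoard_injective (hk : 0 < k) : Function.Injective (liftBoard (m := m) k) := by
  intro s t hst
  ext c
  simpa [mem_liftBoard, liftCell, cellResidue] using
    congrArg (liftCell (⟨0, hk⟩, ⟨0, hk⟩) c ∈ ·) hst

theorem StoneMove.reflTransGen_liftBoard {s t : Finset (Fin m × Fin m)} (h : StoneMove m s t) :
    ReflTransGen (StoneMove (k * m)) (liftBoard k s) (liftBoard k t) := by
  rcases h with ⟨a, b, ha, hb, hab, ha'b, hab', rfl⟩ | ⟨a, ha, rfl⟩ | ⟨b, hb, rfl⟩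
  · set tri : Finset (Fin m × Fin m) := {(a, b), (⟨a + 1, ha⟩, b), (a, ⟨b + 1, hb⟩)}
    have htri : Disjoint tri s := by simp [tri, hab, ha'b, hab']
    have hlift : liftBoard k (s ∪ tri) =
        liftBoard k s ∪ univ.biUnion fun q => tri.image (liftCell q) := by
      ext p
      simp only [mem_union, mem_liftBoard, mem_biUnion, mem_univ, true_and, mem_image_liftCell,
        exists_eq_left']
    rw [hlift]
    refine reflTransGen_union_biUnion (fun q _ u hu => ?_) (fun q _ => ?_)
      (fun q _ q' _ hqq' => ?_)
    · simp only [tri, image_insert, image_singleton, liftCell] at hu ⊢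
      exact StoneMove.union_tromino (by simp [add_assoc]) (by simp [add_assoc]) hu
    · exact disjoint_left.2 fun p hp hps =>
        disjoint_left.1 htri (mem_image_liftCell.1 hp).2 (mem_liftBoard.1 hps)
    · exact disjoint_left.2 fun p hp hp' =>
        hqq' ((mem_image_liftCell.1 hp).1.symm.trans (mem_image_liftCell.1 hp').1)
  · have hlift : liftBoard k (s.filter (·.1 ≠ a)) =
        (liftBoard k s).filter (·.1 ∉ univ.filter (·.modNat = a)) := by
      ext p
      simp [mem_liftBoard, cellResidue, and_comm]
    rw [hlift]
    exact StoneMove.reflTransGen_filter_fst_notMem _ fun i hi j => by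
      simpa [mem_liftBoard, cellResidue, (mem_filter.1 hi).2] using ha j.modNat
  · have hlift : liftBoard k (s.filter (·.2 ≠ b)) =
        (liftBoard k s).filter (·.2 ∉ univ.filter (·.modNat = b)) := by
      ext p
      simp [mem_liftBoard, cellResidue, and_comm]
    rw [hlift]
    exact StoneMove.reflTransGen_filter_snd_notMem _ fun j hj i => by
      simpa [mem_liftBoard, cellResidue, (mem_filter.1 hj).2] using hb i.modNat

theorem transGen_liftBoard (hk : 0 < k) {s t : Finset (Fin m × Fin m)}
    (h : TransGen (StoneMove m) s t) :
    TransGen (StoneMove (k * m)) (liftBoard k s) (liftBoard k t) :=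
  h.lift' _ fun _ _ hst =>
    (reflTransGen_iff_eq_or_transGen.1 hst.reflTransGen_liftBoard).resolve_left
      fun h => hst.ne (liftBoard_injective hk h).symm

end Lift

instance (n : ℕ) (s t : Finset (Fin n × Fin n)) : Decidable (StoneMove n s t) := by
  unfold StoneMove; infer_instance

theorem transGen_stoneMove_three_empty : TransGen (StoneMove 3) ∅ ∅ := by
  have h₁ : StoneMove 3 ∅ {(0, 0), (1, 0), (0, 1)} := by decide
  have h₂ : StoneMove 3 {(0, 0), (1, 0), (0, 1)}
      {(0, 0), (1, 0), (0, 1), (1, 1), (2, 1), (1, 2)} := by decide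
  have h₃ : StoneMove 3 {(0, 0), (1, 0), (0, 1), (1, 1), (2, 1), (1, 2)}
      {(0, 0), (1, 0), (1, 2)} := by decide
  have h₄ : StoneMove 3 {(0, 0), (1, 0), (1, 2)}
      {(0, 0), (1, 0), (1, 2), (0, 1), (1, 1), (0, 2)} := by decide
  have h₅ : StoneMove 3 {(0, 0), (1, 0), (1, 2), (0, 1), (1, 1), (0, 2)}
      {(1, 0), (1, 1), (1, 2)} := by decide
  have h₆ : StoneMove 3 {(1, 0), (1, 1), (1, 2)} ∅ := by decide
  exact .tail (.tail (.tail (.tail (.tail (.single h₁) h₂) h₃) h₄) h₅) h₆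

section Weight

variable {n : ℕ}

def boardWeight (x y : ℂ) (s : Finset (Fin n × Fin n)) : ℂ :=
  ∑ p ∈ s, x ^ (p.1 : ℕ) * y ^ (p.2 : ℕ)

def linePoly (a : Fin n → ℕ) (x : ℂ) : ℂ := ∑ i, (a i : ℂ) * x ^ (i : ℕ)

theorem linePoly_add (a b : Fin n → ℕ) (x : ℂ) :
    linePoly (a + b) x = linePoly a x + linePoly b x := by
  simp only [linePoly, Pi.add_apply, Nat.cast_add, add_mul, sum_add_distrib]

theorem boardWeight_filter_fst_ne_add {s : Finset (Fin n × Fin n)} {i : Fin n}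
    (h : ∀ j, (i, j) ∈ s) (x y : ℂ) :
    boardWeight x y (s.filter (·.1 ≠ i)) + x ^ (i : ℕ) * ∑ j ∈ range n, y ^ j =
      boardWeight x y s := by
  have hcol : s.filter (·.1 = i) = {i} ×ˢ univ := by
    ext ⟨a, b⟩
    simp only [mem_filter, mem_product, mem_singleton, mem_univ, and_true, and_iff_right_iff_imp]
    rintro rfl
    exact h b
  rw [boardWeight, boardWeight, ← sum_filter_not_add_sum_filter s (·.1 = i), hcol,
    sum_product, sum_singleton, mul_sum, ← Fin.sum_univ_eq_sum_range (fun j => x ^ (i : ℕ) * y ^ j)]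

theorem boardWeight_filter_snd_ne_add {s : Finset (Fin n × Fin n)} {j : Fin n}
    (h : ∀ i, (i, j) ∈ s) (x y : ℂ) :
    boardWeight x y (s.filter (·.2 ≠ j)) + y ^ (j : ℕ) * ∑ i ∈ range n, x ^ i =
      boardWeight x y s := by
  have hrow : s.filter (·.2 = j) = univ ×ˢ {j} := by
    ext ⟨a, b⟩
    simp only [mem_filter, mem_product, mem_singleton, mem_univ, true_and, and_iff_right_iff_imp]
    rintro rfl
    exact h a
  rw [boardWeight, boardWeight, ← sum_filter_not_add_sum_filter s (·.2 = j), hrow,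
    sum_product_right, sum_singleton, mul_comm, sum_mul,
    ← Fin.sum_univ_eq_sum_range (fun i => x ^ i * y ^ (j : ℕ))]

/-- The weight identity of a run from `s` to `t` that places `T p` trominoes with corner `p` and
clears column `i` `C i` times and row `j` `R j` times. -/
def Balance (s t : Finset (Fin n × Fin n)) (T : Fin n × Fin n → ℕ) (C R : Fin n → ℕ) : Prop :=
  ∀ x y : ℂ, boardWeight x y t + linePoly C x * ∑ j ∈ range n, y ^ j +
      linePoly R y * ∑ i ∈ range n, x ^ i =
    boardWeight x y s + (1 + x + y) * ∑ p, (T p : ℂ) * (x ^ (p.1 : ℕ) * y ^ (p.2 : ℕ))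

theorem Balance.trans {s u t : Finset (Fin n × Fin n)} {T T' : Fin n × Fin n → ℕ}
    {C C' R R' : Fin n → ℕ} (h : Balance s u T C R) (h' : Balance u t T' C' R') :
    Balance s t (T + T') (C + C') (R + R') := by
  intro x y
  simp only [linePoly_add, Pi.add_apply, Nat.cast_add, add_mul, sum_add_distrib]
  linear_combination h x y + h' x y

theorem StoneMove.exists_balance {s t : Finset (Fin n × Fin n)} (h : StoneMove n s t) :
    ∃ T C R, 0 < ∑ p, T p + ∑ i, C i + ∑ j, R j ∧ Balance s t T C R := by
  rcases h with ⟨i, j, hi, hj, h₁, h₂, h₃, rfl⟩ | ⟨i, hi, rfl⟩ | ⟨j, hj, rfl⟩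
  · refine ⟨Pi.single (i, j) 1, 0, 0, by simp, fun x y => ?_⟩
    rw [boardWeight, boardWeight, sum_union (by simp [h₁, h₂, h₃]),
      sum_insert (by simp [Prod.ext_iff, Fin.ext_iff]),
      sum_insert (by simp [Prod.ext_iff, Fin.ext_iff]), sum_singleton]
    simp [linePoly, Pi.single_apply, pow_succ]
    ring
  · refine ⟨0, Pi.single i 1, 0, by simp, fun x y => ?_⟩
    simp [linePoly, Pi.single_apply, boardWeight_filter_fst_ne_add hi]
  · refine ⟨0, 0, Pi.single j 1, by simp, fun x y => ?_⟩
    simp [linePoly, Pi.single_apply, boardWeight_filter_snd_ne_add hj]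

theorem exists_balance_of_transGen {s t : Finset (Fin n × Fin n)}
    (h : TransGen (StoneMove n) s t) :
    ∃ T C R, 0 < ∑ p, T p + ∑ i, C i + ∑ j, R j ∧ Balance s t T C R := by
  induction h with
  | single h => exact h.exists_balance
  | tail _ h ih =>
    obtain ⟨T, C, R, hpos, hb⟩ := ih
    obtain ⟨T', C', R', -, hb'⟩ := h.exists_balance
    exact ⟨T + T', C + C', R + R', by simp only [Pi.add_apply, sum_add_distrib]; omega,
      hb.trans hb'⟩

theorem sum_add_sum_eq_zero_of_not_three_dvd (h3 : ¬ 3 ∣ n) {C R : Fin n → ℕ}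
    (h : ∀ x y : ℂ, 1 + x + y = 0 →
      linePoly C x * ∑ j ∈ range n, y ^ j + linePoly R y * ∑ i ∈ range n, x ^ i = 0) :
    ∑ i, C i + ∑ j, R j = 0 := by
  have hn : n ≠ 0 := by rintro rfl; exact h3 (dvd_zero 3)
  have hΦ : ∀ z : ℂ, z ^ n = 1 → ∑ i ∈ range n, (-1 - z) ^ i ≠ 0 := fun z hz h0 =>
    neg_one_sub_pow_ne_one h3 hz <| by
      have := geom_sum_mul (-1 - z) n
      rwa [h0, zero_mul, eq_comm, sub_eq_zero] at this
  have hC : ∀ z : ℂ, z ^ n = 1 → z ≠ 1 → linePoly C z = 0 := fun z hz hz1 => by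
    simpa [geom_sum_eq_zero_of_pow_eq_one hz hz1, hΦ z hz] using h z (-1 - z) (by ring)
  have hR : ∀ z : ℂ, z ^ n = 1 → z ≠ 1 → linePoly R z = 0 := fun z hz hz1 => by
    simpa [geom_sum_eq_zero_of_pow_eq_one hz hz1, hΦ z hz] using h (-1 - z) z (by ring)
  have hζ := Complex.isPrimitiveRoot_exp n hn
  have hCn := hζ.mul_eq_sum_of_forall_sum_mul_pow_eq_zero (a := fun i => (C i : ℂ)) hC
  have hRn := hζ.mul_eq_sum_of_forall_sum_mul_pow_eq_zero (a := fun i => (R i : ℂ)) hR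
  have hne : ∑ i ∈ range n, (-2 : ℂ) ^ i ≠ 0 := by
    have := hΦ 1 (one_pow n)
    norm_num at this
    exact this
  have h₁ := h 1 (-2) (by norm_num)
  simp only [linePoly, one_pow, mul_one, sum_const, card_range, nsmul_eq_mul] at h₁
  have hR₂ : (n : ℂ) * ∑ i, (R i : ℂ) * (-2) ^ (i : ℕ) =
      (∑ j, (R j : ℂ)) * ∑ i ∈ range n, (-2 : ℂ) ^ i := by
    simp_rw [mul_sum, ← mul_assoc, hRn, ← mul_sum]
    rw [Fin.sum_univ_eq_sum_range (fun i => (-2 : ℂ) ^ i)]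
  have hsum : (n * ∑ i ∈ range n, (-2 : ℂ) ^ i) * ((∑ i, C i + ∑ j, R j : ℕ) : ℂ) = 0 := by
    push_cast
    linear_combination (n : ℂ) * h₁ - (n : ℂ) * hR₂
  exact_mod_cast (mul_eq_zero.1 hsum).resolve_left (mul_ne_zero (Nat.cast_ne_zero.2 hn) hne)

theorem three_dvd_of_transGen_empty (h : TransGen (StoneMove n) ∅ ∅) : 3 ∣ n := by
  by_contra h3
  obtain ⟨T, C, R, hpos, hbal⟩ := exists_balance_of_transGen h
  have hCR := sum_add_sum_eq_zero_of_not_three_dvd h3 fun x y hxy => by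
    simpa [boardWeight, hxy] using hbal x y
  obtain ⟨hC, hR⟩ : ∑ i, C i = 0 ∧ ∑ j, R j = 0 := by omega
  have h₁₁ := hbal 1 1
  simp only [boardWeight, linePoly, one_pow, mul_one, sum_const, card_range, card_empty,
    nsmul_eq_mul, Nat.cast_zero, zero_add] at h₁₁
  norm_cast at h₁₁
  rw [hC, hR] at h₁₁
  omega

end Weight

/-- 2021 USAMO Problem 3: for `n ≥ 2`, a nonzero number of legal moves can take
the empty `n`-by-`n` board back to the empty board iff `3 ∣ n`. -/
theorem usamo2021_p3 (n : ℕ) (hn : 2 ≤ n) :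
    Relation.TransGen (StoneMove n) ∅ ∅ ↔ 3 ∣ n := by
  refine ⟨three_dvd_of_transGen_empty, ?_⟩
  rintro ⟨k, rfl⟩
  rw [mul_comm]
  simpa using transGen_liftBoard (k := k) (by omega) transGen_stoneMove_three_empty
end
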